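/- The matrices A = [[4,3,0],[-3,4,0],[0,0,5]] and B = [[4,0,3],[0,5,0],[-3,0,4]] satisfy: for any two distinct binary strings x ≠ y of the same length n, the matrix products M(x) and M(y) (where M maps 0 to A, 1 to B, and a string to the product of the corresponding matrices) are distinct. -/

import Mathlib

/-!
Reduced mod 5, each of the two integer matrices has rank one: the image of `genModFive b` is
spanned by `ray b`, and `genModFive b` sends `ray c` to a nonzero multiple of `ray b`. Hence the
product of a word sends `ray false` to a nonzero multiple of the ray of its leftmost letter, so the
integer product of a word determines its leftmost letter. Both matrices have determinant
`125 ≠ 0`, so that letter can be cancelled, and induction on the length recovers the whole word.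
-/

theorem List.eq_of_prod_map_eq {M α : Type*} [Monoid M] {f : α → M}
    (hreg : ∀ a, IsLeftRegular (f a))
    (hhead : ∀ (a b : α) (l₁ l₂ : List α), f a * (l₁.map f).prod = f b * (l₂.map f).prod → a = b) :
    ∀ {l₁ l₂ : List α}, l₁.length = l₂.length → (l₁.map f).prod = (l₂.map f).prod → l₁ = l₂
  | [], [], _, _ => rfl
  | a :: l₁, b :: l₂, hlen, h => by
    simp only [List.map_cons, List.prod_cons] at h
    obtain rfl := hhead a b l₁ l₂ h
    rw [eq_of_prod_map_eq hreg hhead (Nat.succ_injective hlen) (hreg a h)]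

theorem Matrix.map_prod_map {n α R S : Type*} [Fintype n] [DecidableEq n] [Semiring R]
    [Semiring S] (f : R →+* S) (g : α → Matrix n n R) (l : List α) :
    (l.map g).prod.map f = (l.map fun a => (g a).map f).prod := by
  rw [← RingHom.mapMatrix_apply, map_list_prod, List.map_map]
  rfl

namespace AmbainisWatrous

open Matrix

def gen : Bool → Matrix (Fin 3) (Fin 3) ℤ
  | false => !![4, 3, 0; -3, 4, 0; 0, 0, 5]
  | true => !![4, 0, 3; 0, 5, 0; -3, 0, 4]

def genModFive (b : Bool) : Matrix (Fin 3) (Fin 3) (ZMod 5) :=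
  (gen b).map (↑)

def ray : Bool → Fin 3 → ZMod 5
  | false => ![2, 1, 0]
  | true => ![2, 0, 1]

theorem genModFive_mulVec_ray (b c : Bool) :
    genModFive b *ᵥ ray c = (if b = c then 3 else 4 : ZMod 5) • ray b := by
  cases b <;> cases c <;> decide

theorem exists_prod_genModFive_mulVec_ray (l : List Bool) (c : Bool) :
    ∃ t : ZMod 5, t ≠ 0 ∧ (l.map genModFive).prod *ᵥ ray c = t • ray (l.headD c) := by
  have : Fact (Nat.Prime 5) := ⟨Nat.prime_five⟩
  induction l with
  | nil => exact ⟨1, one_ne_zero, by simp⟩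
  | cons b l ih =>
    obtain ⟨t, ht, hl⟩ := ih
    have hscalar : (if b = l.headD c then 3 else 4 : ZMod 5) ≠ 0 := by
      split_ifs <;> decide +revert
    refine ⟨_, mul_ne_zero hscalar ht, ?_⟩
    rw [List.map_cons, List.prod_cons, ← mulVec_mulVec, hl, mulVec_smul,
      genModFive_mulVec_ray, smul_smul, mul_comm, List.headD_cons]

theorem prod_map_genModFive (l : List Bool) :
    (l.map genModFive).prod = ((l.map gen).prod).map (↑) :=
  (map_prod_map (Int.castRingHom (ZMod 5)) gen l).symm

theorem head_eq_of_gen_mul_prod_eq (a b : Bool) (l₁ l₂ : List Bool)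
    (h : gen a * (l₁.map gen).prod = gen b * (l₂.map gen).prod) : a = b := by
  obtain ⟨s, hs, ha⟩ := exists_prod_genModFive_mulVec_ray (a :: l₁) false
  obtain ⟨t, ht, hb⟩ := exists_prod_genModFive_mulVec_ray (b :: l₂) false
  rw [prod_map_genModFive, List.map_cons, List.prod_cons, h, ← List.prod_cons, ← List.map_cons,
    ← prod_map_genModFive, hb] at ha
  have hsecond := congrFun ha 1
  cases a <;> cases b <;> simp_all [ray]

theorem gen_isLeftRegular (b : Bool) : IsLeftRegular (gen b) :=
  (isRegular_of_isLeftRegular_det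
    (IsRegular.of_ne_zero (by cases b <;> simp [gen, det_fin_three])).left).left

theorem eq_of_prod_map_gen_eq {l₁ l₂ : List Bool} (hlen : l₁.length = l₂.length)
    (h : (l₁.map gen).prod = (l₂.map gen).prod) : l₁ = l₂ :=
  List.eq_of_prod_map_eq gen_isLeftRegular head_eq_of_gen_mul_prod_eq hlen h

end AmbainisWatrous

open AmbainisWatrous in
theorem AW_injective_on_equal_length_strings
    (A : Matrix (Fin 3) (Fin 3) ℚ) (B : Matrix (Fin 3) (Fin 3) ℚ)
    (hA : A = !![4, 3, 0; -3, 4, 0; 0, 0, 5])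
    (hB : B = !![4, 0, 3; 0, 5, 0; -3, 0, 4])
    (M : Bool → Matrix (Fin 3) (Fin 3) ℚ)
    (hM0 : M false = A) (hM1 : M true = B)
    (n : ℕ) (x y : Fin n → Bool) (hxy : x ≠ y) :
    (List.ofFn fun i => M (x i)).reverse.prod ≠
      (List.ofFn fun i => M (y i)).reverse.prod := by
  have hM : M = fun b => (gen b).map (Int.castRingHom ℚ) := by
    funext b
    cases b <;> ext i j <;> fin_cases i <;> fin_cases j <;> simp [hM0, hA, hM1, hB, gen]
  have hprod (z : Fin n → Bool) : (List.ofFn fun i => M (z i)).reverse.prod =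
      ((List.ofFn z).reverse.map gen).prod.map (Int.castRingHom ℚ) := by
    rw [Matrix.map_prod_map, List.map_reverse, List.map_ofFn, hM]
    rfl
  rw [hprod, hprod]
  intro h
  have hword := eq_of_prod_map_gen_eq (by simp)
    (Matrix.map_injective (Int.castRingHom ℚ).injective_int h)
  exact hxy (List.ofFn_inj.mp (List.reverse_injective hword))
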